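/- If {X₁, …, Xₙ} is a finite family of pairwise disjoint compact subsets of a metric space, then dim_tC (X₁ ∪ ⋯ ∪ Xₙ) = max{ dim_tC Xᵢ : i = 1, …, n }. -/

import Mathlib

open Metric Set Topology
open scoped ENNReal NNReal

noncomputable section

/-- Hausdorff dimension of a set, with the convention that the empty set has dimension `-1`. -/
def hdim {X : Type*} [EMetricSpace X] (s : Set X) : EReal :=
  open scoped Classical in
  if s.Nonempty then ((dimH s : ℝ≥0∞) : EReal) else -1

/-- Hausdorff dimension of a metric space. -/
def hdimSpace (X : Type*) [EMetricSpace X] : EReal :=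
  hdim (Set.univ : Set X)

/-- A quasisymmetric embedding between metric spaces: a topological embedding `f` together with
a homeomorphism `η` of `[0,∞)` such that `d(x,a) ≤ t·d(x,b)` implies
`d(f x, f a) ≤ η t · d(f x, f b)`. -/
def IsQuasisymmetric {X Y : Type*} [MetricSpace X] [MetricSpace Y] (f : X → Y) : Prop :=
  Topology.IsEmbedding f ∧ ∃ η : ℝ≥0 ≃ₜ ℝ≥0, ∀ (x a b : X) (t : ℝ≥0), 0 < t →
    dist x a ≤ (t : ℝ) * dist x b → dist (f x) (f a) ≤ (η t : ℝ) * dist (f x) (f b)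

/-- Conformal dimension: infimum of Hausdorff dimensions of quasisymmetric images. -/
def conformalDim (X : Type u) [MetricSpace X] : EReal :=
  sInf { c : EReal | ∃ (Y : Type u) (_ : MetricSpace Y) (f : X → Y),
    IsQuasisymmetric f ∧ c = hdim (Set.range f) }

/-- Topological conformal dimension. -/
def tcDim (X : Type u) [MetricSpace X] : EReal :=
  sInf { c : EReal | ∃ 𝒰 : Set (Set X), TopologicalSpace.IsTopologicalBasis 𝒰 ∧
    ∀ U ∈ 𝒰, conformalDim ↥(frontier U) ≤ c - 1 }

/-- Topological Hausdorff dimension. -/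
def thDim (X : Type*) [MetricSpace X] : EReal :=
  sInf { c : EReal | ∃ 𝒰 : Set (Set X), TopologicalSpace.IsTopologicalBasis 𝒰 ∧
    ∀ U ∈ 𝒰, hdim (frontier U) ≤ c - 1 }

end

open TopologicalSpace Function

/-! Each `Xᵢ` is clopen in the union, because its complement there is the finite union of the
other, closed, pieces. Frontiers taken inside a clopen piece are therefore frontiers in the union,
so gluing bases of the pieces gives a basis of the union with the same frontiers, while restricting
a basis of the union to a piece only shrinks frontiers. -/

lemma hdim_mono {X : Type*} [EMetricSpace X] {s t : Set X} (h : s ⊆ t) : hdim s ≤ hdim t := by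
  unfold hdim
  split_ifs with hs ht ht
  · exact EReal.coe_ennreal_le_coe_ennreal_iff.2 (dimH_mono h)
  · exact absurd (hs.mono h) ht
  · exact (by norm_num : (-1 : EReal) ≤ 0).trans (EReal.coe_ennreal_nonneg _)
  · exact le_rfl

lemma IsQuasisymmetric.comp_isometry {A B C : Type*} [MetricSpace A] [MetricSpace B]
    [MetricSpace C] {f : B → C} (hf : IsQuasisymmetric f) {e : A → B} (he : Isometry e) :
    IsQuasisymmetric (f ∘ e) := by
  obtain ⟨hemb, η, hη⟩ := hf
  exact ⟨hemb.comp he.isEmbedding, η, fun x a b t ht hle =>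
    hη (e x) (e a) (e b) t ht (by rwa [he.dist_eq, he.dist_eq])⟩

lemma conformalDim_le_of_isometry {A B : Type u} [MetricSpace A] [MetricSpace B]
    {e : A → B} (he : Isometry e) : conformalDim A ≤ conformalDim B := by
  refine le_sInf fun c ⟨Z, hZ, f, hf, hc⟩ => hc ▸ ?_
  exact sInf_le_of_le ⟨Z, hZ, f ∘ e, hf.comp_isometry he, rfl⟩
    (hdim_mono (range_comp_subset_range e f))

lemma Isometry.conformalDim_image {A B : Type u} [MetricSpace A] [MetricSpace B]
    {e : A → B} (he : Isometry e) (s : Set A) : conformalDim ↥(e '' s) = conformalDim ↥s :=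
  let iso : ↥s ≃ᵢ ↥(e '' s) := ⟨Equiv.Set.image e s he.injective, fun x y => he x y⟩
  le_antisymm (conformalDim_le_of_isometry iso.symm.isometry)
    (conformalDim_le_of_isometry iso.isometry)

lemma tcDim_le_of_isometry {A B : Type u} [MetricSpace A] [MetricSpace B]
    {e : A → B} (he : Isometry e) : tcDim A ≤ tcDim B := by
  refine le_sInf fun c ⟨𝒰, h𝒰, hfr⟩ =>
    sInf_le ⟨(e ⁻¹' ·) '' 𝒰, h𝒰.isInducing he.isEmbedding.isInducing, ?_⟩
  rintro _ ⟨U, hU, rfl⟩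
  have hmaps : MapsTo e (frontier (e ⁻¹' U)) (frontier U) :=
    he.continuous.frontier_preimage_subset U
  exact (conformalDim_le_of_isometry (e := hmaps.restrict) fun x y => he x.1 y.1).trans (hfr U hU)

lemma IsClopen.frontier_image_val {Z : Type*} [TopologicalSpace Z] {S : Set Z}
    (hS : IsClopen S) (V : Set S) : frontier (Subtype.val '' V) = Subtype.val '' frontier V := by
  have hsub : frontier (Subtype.val '' V) ⊆ S :=
    frontier_subset_closure.trans
      (closure_minimal (image_subset_range _ _ |>.trans Subtype.range_val.subset) hS.isClosed)
  conv_rhs => rw [← Subtype.val_injective.preimage_image V,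
    ← hS.isOpen.isOpenMap_subtype_val.preimage_frontier_eq_frontier_preimage
      continuous_subtype_val, Subtype.image_preimage_coe, inter_eq_right.2 hsub]

lemma isClopen_of_pairwise_disjoint_isClosed_cover {Z ι : Type*} [TopologicalSpace Z] [Finite ι]
    {S : ι → Set Z} (hclosed : ∀ i, IsClosed (S i)) (hcover : ⋃ i, S i = univ)
    (hdisj : Pairwise (Disjoint on S)) (i : ι) : IsClopen (S i) := by
  have hcompl : (S i)ᶜ = ⋃ (j) (_ : j ≠ i), S j := by
    ext z
    obtain ⟨k, hk⟩ := mem_iUnion.1 (hcover ▸ mem_univ z)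
    simp only [mem_compl_iff, mem_iUnion]
    exact ⟨fun hz => ⟨k, fun h => hz (h ▸ hk), hk⟩,
      fun ⟨j, hji, hj⟩ hzi => disjoint_left.1 (hdisj hji) hj hzi⟩
  refine ⟨hclosed i, ?_⟩
  rw [← isClosed_compl_iff, hcompl]
  exact isClosed_iUnion_of_finite fun j => isClosed_iUnion_of_finite fun _ => hclosed j

lemma tcDim_le_iSup_of_isClopen_cover {Z : Type u} [MetricSpace Z] {ι : Type*}
    {S : ι → Set Z} (hS : ∀ i, IsClopen (S i)) (hcover : ⋃ i, S i = univ) :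
    tcDim Z ≤ ⨆ i, tcDim ↥(S i) := by
  refine le_of_forall_gt_imp_ge_of_dense fun d hd => ?_
  have hlt : ∀ i, tcDim ↥(S i) < d := fun i => (le_iSup _ i).trans_lt hd
  choose c hc hcd using fun i => sInf_lt_iff.1 (hlt i)
  choose 𝒱 h𝒱 hfr using hc
  refine sInf_le ⟨_, isTopologicalBasis_of_cover (fun i => (hS i).isOpen) hcover h𝒱, ?_⟩
  simp only [mem_iUnion, mem_image]
  rintro _ ⟨i, V, hV, rfl⟩
  rw [(hS i).frontier_image_val, isometry_subtype_coe.conformalDim_image]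
  exact (hfr i V hV).trans (EReal.sub_le_sub (hcd i).le le_rfl)

theorem stmt6_general {Y : Type u} [MetricSpace Y] (n : ℕ) (X : Fin n → Set Y)
    (hcomp : ∀ i, IsCompact (X i)) (hdisj : ∀ i j, i ≠ j → Disjoint (X i) (X j)) :
    tcDim ↥(⋃ i, X i) = ⨆ i, tcDim ↥(X i) := by
  let S : Fin n → Set ↥(⋃ i, X i) := fun i => Subtype.val ⁻¹' X i
  have hcover : ⋃ i, S i = univ := by
    rw [← preimage_iUnion, Subtype.coe_preimage_self]
  have hclopen : ∀ i, IsClopen (S i) :=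
    isClopen_of_pairwise_disjoint_isClosed_cover
      (fun i => (hcomp i).isClosed.preimage continuous_subtype_val) hcover
      (fun i j hij => (hdisj i j hij).preimage _)
  have hpiece_le : ∀ i, tcDim ↥(S i) ≤ tcDim ↥(X i) := fun i =>
    tcDim_le_of_isometry (e := fun z => ⟨z.1.1, z.2⟩) fun _ _ => rfl
  have hle_union : ∀ i, tcDim ↥(X i) ≤ tcDim ↥(⋃ i, X i) := fun i =>
    tcDim_le_of_isometry (e := inclusion (subset_iUnion X i)) fun _ _ => rfl
  exact le_antisymm ((tcDim_le_iSup_of_isClopen_cover hclopen hcover).trans (iSup_mono hpiece_le))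
    (iSup_le hle_union)

/-- If `X₁, …, Xₙ` are pairwise disjoint compact subsets of a metric space, then
`dim_tC (X₁ ∪ ⋯ ∪ Xₙ) = max_i dim_tC Xᵢ`. -/
theorem stmt6 {Y : Type u} [MetricSpace Y] (n : ℕ) (hn : 0 < n) (X : Fin n → Set Y)
    (hcomp : ∀ i, IsCompact (X i)) (hdisj : ∀ i j, i ≠ j → Disjoint (X i) (X j)) :
    tcDim ↥(⋃ i, X i) = ⨆ i, tcDim ↥(X i) :=
  stmt6_general n X hcomp hdisj
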